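/- Let n ≥ 2, let Ω ⊆ ℝⁿ be a bounded measurable set, and let q : ℝⁿ → ℂ be integrable on Ω (with respect to Lebesgue measure). Suppose that for all vectors η, ξ ∈ ℝⁿ with η·ξ = 0 and |η| = |ξ| (Euclidean inner product and norm) one has ∫_Ω q(x) · exp((η + iξ)·x) · exp((−η + iξ)·x) dx = 0, where for a complex vector ρ = a + ib ∈ ℂⁿ we write exp(ρ·x) = exp((a·x) + i(b·x)). Then q = 0 almost everywhere in Ω. -/

import Mathlib

/-!
For every `η` the product of the two exponentials is `e^{2i ξ·x}`, and when `n ≥ 2` each `ξ`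
admits an `η ⊥ ξ` with `|η| = |ξ|`. Hence the Fourier transform of the zero extension of `q`
vanishes identically. An integrable function with vanishing Fourier transform is zero a.e.:
every test function is the Fourier transform of a Schwartz function `ψ`, and pairing the
function with `𝓕 ψ` is the same as pairing its Fourier transform with `ψ`.
-/

open MeasureTheory RealInnerProductSpace FourierTransform Complex

theorem exists_inner_eq_zero_norm_eq {E : Type*} [NormedAddCommGroup E] [InnerProductSpace ℝ E]
    [FiniteDimensional ℝ E] (hE : 2 ≤ Module.finrank ℝ E) (ξ : E) :
    ∃ η : E, ⟪η, ξ⟫ = 0 ∧ ‖η‖ = ‖ξ‖ := by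
  have hpos : 0 < Module.finrank ℝ (ℝ ∙ ξ)ᗮ := by
    have := Submodule.finrank_add_finrank_orthogonal (ℝ ∙ ξ)
    have : Module.finrank ℝ (ℝ ∙ ξ) ≤ 1 := by
      simpa using finrank_span_le_card (R := ℝ) ({ξ} : Set E)
    omega
  obtain ⟨⟨v, hv⟩, hv0⟩ := Module.finrank_pos_iff_exists_ne_zero.1 hpos
  have hv0 : v ≠ 0 := by simpa using hv0
  refine ⟨(‖ξ‖ / ‖v‖) • v, ?_, ?_⟩
  · rw [real_inner_smul_left, real_inner_comm,
      Submodule.mem_orthogonal_singleton_iff_inner_right.1 hv, mul_zero]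
  · rw [norm_smul, Real.norm_of_nonneg (by positivity),
      div_mul_cancel₀ _ (norm_ne_zero_iff.2 hv0)]

section Fourier

variable {V : Type*} [NormedAddCommGroup V] [InnerProductSpace ℝ V]

theorem cexp_inner_add_mul_cexp_neg_inner_add (η ξ x : V) :
    cexp (⟪η, x⟫ + I * ⟪ξ, x⟫) * cexp (⟪-η, x⟫ + I * ⟪ξ, x⟫) = cexp (2 * I * ⟪ξ, x⟫) := by
  rw [← Complex.exp_add, inner_neg_left]
  push_cast
  ring_nf

variable [FiniteDimensional ℝ V] [MeasurableSpace V] [BorelSpace V]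

theorem fourier_indicator_eq_setIntegral {s : Set V} (hs : MeasurableSet s) (f : V → ℂ)
    (η w : V) : 𝓕 (s.indicator f) w = ∫ x in s, f x * cexp (⟪η, x⟫ + I * ⟪-Real.pi • w, x⟫) *
      cexp (⟪-η, x⟫ + I * ⟪-Real.pi • w, x⟫) := by
  rw [Real.fourier_eq', ← integral_indicator hs]
  congr 1 with x
  by_cases hx : x ∈ s
  · rw [Set.indicator_of_mem hx, Set.indicator_of_mem hx, mul_assoc (f x),
      cexp_inner_add_mul_cexp_neg_inner_add, smul_eq_mul, mul_comm, real_inner_smul_left,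
      real_inner_comm]
    push_cast
    ring_nf
  · simp [hx]

variable {F : Type*} [NormedAddCommGroup F] [NormedSpace ℂ F] [CompleteSpace F]

theorem Real.integral_fourier_smul_eq {f : V → ℂ} {g : V → F} (hf : Integrable f)
    (hg : Integrable g) : ∫ ξ, 𝓕 f ξ • g ξ = ∫ x, f x • 𝓕 g x := by
  simpa using! VectorFourier.integral_fourierIntegral_smul_eq_flip (L := innerₗ V)
    Real.continuous_fourierChar continuous_inner hf hg

theorem MeasureTheory.Integrable.ae_eq_zero_of_fourier_eq_zero {g : V → F} (hg : Integrable g)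
    (h𝓕 : 𝓕 g = 0) : g =ᵐ[volume] 0 := by
  refine ae_eq_zero_of_integral_contDiff_smul_eq_zero hg.locallyIntegrable fun φ hφ hφc => ?_
  have hφc' : HasCompactSupport (Complex.ofRealCLM ∘ φ) := hφc.comp_left rfl
  set Φ : SchwartzMap V ℂ := hφc'.toSchwartzMap (by fun_prop)
  calc ∫ x, φ x • g x = ∫ x, 𝓕 (𝓕⁻ Φ) x • g x := by simp [Φ]
    _ = 0 := by
      rw [SchwartzMap.fourier_coe, Real.integral_fourier_smul_eq (𝓕⁻ Φ).integrable hg, h𝓕]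
      simp

end Fourier

theorem stmt_3_general {n : ℕ} (hn : 2 ≤ n) (Ω : Set (EuclideanSpace ℝ (Fin n)))
    (hΩ_meas : MeasurableSet Ω)
    (q : EuclideanSpace ℝ (Fin n) → ℂ)
    (hq : IntegrableOn q Ω volume)
    (h : ∀ η ξ : EuclideanSpace ℝ (Fin n), ⟪η, ξ⟫ = 0 → ‖η‖ = ‖ξ‖ →
      ∫ x in Ω, q x * Complex.exp ((⟪η, x⟫ : ℂ) + Complex.I * (⟪ξ, x⟫ : ℂ)) *
        Complex.exp ((⟪-η, x⟫ : ℂ) + Complex.I * (⟪ξ, x⟫ : ℂ)) = 0) :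
    q =ᵐ[volume.restrict Ω] 0 := by
  have hdim : 2 ≤ Module.finrank ℝ (EuclideanSpace ℝ (Fin n)) := by simpa using hn
  have h𝓕 : 𝓕 (Ω.indicator q) = 0 := by
    funext w
    obtain ⟨η, hηξ, hη⟩ := exists_inner_eq_zero_norm_eq hdim (-Real.pi • w)
    rw [fourier_indicator_eq_setIntegral hΩ_meas q η w, h η _ hηξ hη]
    rfl
  have hq_ae := ((integrable_indicator_iff hΩ_meas).2 hq).ae_eq_zero_of_fourier_eq_zero h𝓕
  exact (indicator_ae_eq_restrict hΩ_meas).symm.trans (ae_restrict_of_ae hq_ae)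

/-- Calderón's density argument: if `q` is integrable on a bounded measurable set `Ω ⊆ ℝⁿ`,
`n ≥ 2`, and the integral of `q` against the product of the two exponential harmonic functions
`e^{(η+iξ)·x}` and `e^{(-η+iξ)·x}` vanishes for all `η ⊥ ξ` with `|η| = |ξ|`,
then `q = 0` a.e. in `Ω`. -/
theorem stmt_3 {n : ℕ} (hn : 2 ≤ n) (Ω : Set (EuclideanSpace ℝ (Fin n)))
    (hΩ_meas : MeasurableSet Ω) (hΩ_bdd : Bornology.IsBounded Ω)
    (q : EuclideanSpace ℝ (Fin n) → ℂ)
    (hq : IntegrableOn q Ω volume)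
    (h : ∀ η ξ : EuclideanSpace ℝ (Fin n), ⟪η, ξ⟫ = 0 → ‖η‖ = ‖ξ‖ →
      ∫ x in Ω, q x * Complex.exp ((⟪η, x⟫ : ℂ) + Complex.I * (⟪ξ, x⟫ : ℂ)) *
        Complex.exp ((⟪-η, x⟫ : ℂ) + Complex.I * (⟪ξ, x⟫ : ℂ)) = 0) :
    q =ᵐ[volume.restrict Ω] 0 :=
  stmt_3_general hn Ω hΩ_meas q hq h
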